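/- arXiv:2307.00898 — 6 statements merged into one kernel-verified Lean document; each statement's English description precedes it below -/
import Mathlib

section
/- Let v = (v_1,…,v_n)^T ∈ R_+^n be a Q-basis of a number field K of degree n, and suppose M is an integer unimodular matrix with M v = ε v for some real ε. Then ε ∈ K, ε is an algebraic unit (i.e., ε ∈ O_K with N_{K/Q}(ε) = ±1), and M = (T_ε^v)^T, the transpose of the matrix of multiplication by ε in the basis v. -/
/-! Since `v₁ ≠ 0`, `ε = (M v)₁ / v₁` lies in `K`, and `M v = ε v` says that multiplication by `ε`
has matrix `Mᵀ` in the basis `v`. By Cayley–Hamilton, `ε` is a root of the monic integer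
polynomial `charpoly Mᵀ`; as `M` is unimodular, `(Mᵀ)⁻¹` is an integer matrix, and it is the
matrix of multiplication by `ε⁻¹`, so `ε⁻¹` is integral as well. -/

open Matrix Polynomial

namespace Algebra

theorem isIntegral_of_leftMulMatrix_eq_map {R S K : Type*} [CommRing R] [CommRing S]
    [CommRing K] [Algebra R S] [Algebra S K] [Algebra R K] [IsScalarTower R S K]
    {ι : Type*} [Fintype ι] [DecidableEq ι] (b : Module.Basis ι S K) {x : K}
    {A : Matrix ι ι R} (hx : leftMulMatrix b x = A.map (algebraMap R S)) :
    IsIntegral R x := by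
  refine ⟨A.charpoly, A.charpoly_monic, ?_⟩
  rw [← aeval_def]
  apply leftMulMatrix_injective b
  rw [map_zero]
  change (leftMulMatrix b).restrictScalars R (aeval x A.charpoly) = 0
  rw [← aeval_algHom_apply, AlgHom.restrictScalars_apply, hx]
  change aeval ((ofId R S).mapMatrix A) A.charpoly = 0
  rw [aeval_algHom_apply, aeval_self_charpoly, map_zero]

theorem ne_zero_and_leftMulMatrix_inv_eq_map {R F K : Type*} [CommRing R] [Field F] [Field K]
    [Algebra R F] [Algebra F K] {ι : Type*} [Fintype ι] [DecidableEq ι]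
    (b : Module.Basis ι F K) {x : K} {A B : Matrix ι ι R} (hAB : A * B = 1)
    (hx : leftMulMatrix b x = A.map (algebraMap R F)) :
    x ≠ 0 ∧ leftMulMatrix b x⁻¹ = B.map (algebraMap R F) := by
  have hAB' : A.map (algebraMap R F) * B.map (algebraMap R F) = 1 := by
    rw [← RingHom.mapMatrix_apply, ← RingHom.mapMatrix_apply, ← map_mul, hAB, map_one]
  have hx0 : x ≠ 0 := by
    rintro rfl
    have : Nonempty ι := b.index_nonempty
    rw [map_zero] at hx
    rw [← hx, zero_mul] at hAB'
    exact zero_ne_one hAB'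
  refine ⟨hx0, ?_⟩
  calc leftMulMatrix b x⁻¹
      = leftMulMatrix b x⁻¹ * (A.map (algebraMap R F) * B.map (algebraMap R F)) := by
        rw [hAB', mul_one]
    _ = B.map (algebraMap R F) := by
        rw [← hx, ← mul_assoc, ← map_mul, inv_mul_cancel₀ hx0, map_one, one_mul]

end Algebra

theorem IntermediateField.exists_leftMulMatrix_eq_of_mulVec_eq_smul {F L : Type*} [Field F]
    [Field L] [Algebra F L] {K : IntermediateField F L} {ι : Type*} [Fintype ι] [DecidableEq ι]
    (b : Module.Basis ι F K) {M : Matrix ι ι F} {ε : L}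
    (hM : M.map (algebraMap F L) *ᵥ (fun i => (b i : L)) = ε • fun i => (b i : L)) :
    ∃ e : K, (e : L) = ε ∧ Algebra.leftMulMatrix b e = Mᵀ := by
  obtain ⟨i₀⟩ := b.index_nonempty
  set s : ι → K := fun i => ∑ j, M i j • b j
  have hs : ∀ i, (s i : L) = ε * b i := fun i => by
    simpa [s, mulVec, dotProduct, Algebra.smul_def] using congrFun hM i
  have hb : ∀ i, (b i : L) ≠ 0 := fun i => by exact_mod_cast b.ne_zero i
  have he : ((s i₀ / b i₀ : K) : L) = ε := by
    rw [IntermediateField.coe_div, hs, mul_div_cancel_right₀ _ (hb i₀)]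
  refine ⟨s i₀ / b i₀, he, ?_⟩
  have hmul : ∀ j, s i₀ / b i₀ * b j = s j := fun j => by
    apply Subtype.ext
    rw [MulMemClass.coe_mul, he, hs]
  ext i j
  rw [Algebra.leftMulMatrix_eq_repr_mul, hmul, b.repr_sum_self, transpose_apply]

set_option synthInstance.maxHeartbeats 1000000 in

theorem stmt6_general (n : ℕ) (K : IntermediateField ℚ ℝ) (b : Module.Basis (Fin n) ℚ K)
    (M : Matrix (Fin n) (Fin n) ℤ) (hdet : M.det = 1 ∨ M.det = -1)
    (ε : ℝ)
    (hM : (M.map ((↑) : ℤ → ℝ)) *ᵥ (fun i => (b i : ℝ)) = ε • fun i => (b i : ℝ)) :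
    ∃ e : K, (e : ℝ) = ε ∧ e ≠ 0 ∧ IsIntegral ℤ e ∧ IsIntegral ℤ e⁻¹ ∧
      M.map ((↑) : ℤ → ℚ) = (LinearMap.toMatrix b b (LinearMap.mulLeft ℚ e))ᵀ := by
  have hMℚ : (M.map ((↑) : ℤ → ℚ)).map (algebraMap ℚ ℝ) = M.map ((↑) : ℤ → ℝ) := by
    ext i j; simp
  obtain ⟨e, he, hmat⟩ :
      ∃ e : K, (e : ℝ) = ε ∧ Algebra.leftMulMatrix b e = (M.map ((↑) : ℤ → ℚ))ᵀ :=
    IntermediateField.exists_leftMulMatrix_eq_of_mulVec_eq_smul b (hMℚ ▸ hM)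
  have hmatℤ : Algebra.leftMulMatrix b e = Mᵀ.map (algebraMap ℤ ℚ) := hmat
  have hunit : IsUnit Mᵀ.det := by
    rw [det_transpose]
    rcases hdet with h | h <;> simp [h]
  obtain ⟨hne, hinv⟩ :=
    Algebra.ne_zero_and_leftMulMatrix_inv_eq_map b (mul_nonsing_inv _ hunit) hmatℤ
  exact ⟨e, he, hne, Algebra.isIntegral_of_leftMulMatrix_eq_map b hmatℤ,
    Algebra.isIntegral_of_leftMulMatrix_eq_map b hinv,
    (transpose_transpose _).symm.trans (congrArg transpose hmat.symm)⟩

set_option synthInstance.maxHeartbeats 1000000 in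
/-- If `v ∈ ℝ₊ⁿ` is a ℚ-basis of a number field `K` of degree `n`, and `M` is a unimodular
integer matrix with `M v = ε v` for a real `ε`, then `ε ∈ K`, `ε` is an algebraic unit, and
`M` is the transpose of the matrix of multiplication by `ε` in the basis `v`. -/
theorem stmt6 (n : ℕ) (K : IntermediateField ℚ ℝ) (b : Module.Basis (Fin n) ℚ K)
    (hpos : ∀ i, 0 < (b i : ℝ))
    (M : Matrix (Fin n) (Fin n) ℤ) (hdet : M.det = 1 ∨ M.det = -1)
    (ε : ℝ)
    (hM : (M.map ((↑) : ℤ → ℝ)) *ᵥ (fun i => (b i : ℝ)) = ε • fun i => (b i : ℝ)) :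
    ∃ e : K, (e : ℝ) = ε ∧ e ≠ 0 ∧ IsIntegral ℤ e ∧ IsIntegral ℤ e⁻¹ ∧
      M.map ((↑) : ℤ → ℚ) = (LinearMap.toMatrix b b (LinearMap.mulLeft ℚ e))ᵀ :=
  stmt6_general n K b M hdet ε hM
end

section
/- Let M be a primitive nonnegative square real matrix and let v ∈ R_+^n (all components strictly positive) be an eigenvector of M with eigenvalue λ. Let w ∈ R^n be another eigenvector of M with eigenvalue μ ≠ λ. Then w is not a vector with all nonnegative components; i.e., w ∉ R_{≥0}^n \ {0}. -/
/-!
Some power `A = M ^ k` is entrywise positive, and `v`, `w` are eigenvectors of `A`. A positive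
matrix sends a nonzero nonnegative vector to a strictly positive one, so `w` is strictly positive.
Given a positive eigenvector `x` (eigenvalue `a`) and a nonnegative eigenvector `y` (eigenvalue `b`)
of `A`, let `c` be the least ratio `y i / x i`: then `y - c • x` is nonnegative with a zero entry,
and unless it vanishes, `A` makes that entry positive, which forces `a < b`. Applied to `(v, w)` and
to `(w, v)`, this leaves only the case that `v` and `w` are proportional, i.e. `λ = μ`.
-/

open Matrix

namespace Matrix

variable {ι R : Type*} [Fintype ι]

theorem pow_mulVec_of_mulVec_eq_smul [DecidableEq ι] [CommSemiring R] {M : Matrix ι ι R}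
    {x : ι → R} {c : R} (h : M *ᵥ x = c • x) (k : ℕ) : (M ^ k) *ᵥ x = c ^ k • x := by
  induction k with
  | zero => simp
  | succ k ih =>
    rw [pow_succ, ← mulVec_mulVec, h, mulVec_smul, ih, smul_smul, pow_succ, mul_comm]

theorem eq_of_mulVec_eq_smul_of_eq_smul [Field R] {M : Matrix ι ι R} {x y : ι → R} {a b c : R}
    (hx : M *ᵥ x = a • x) (hy : M *ᵥ y = b • y) (hxy : y = c • x) (hy0 : y ≠ 0) : a = b := by
  refine smul_left_injective R hy0 ?_
  calc a • y = c • (M *ᵥ x) := by rw [hx, hxy, smul_comm]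
    _ = b • y := by rw [← mulVec_smul, ← hxy, hy]

section LinearOrderedField

variable [Field R] [LinearOrder R] [IsStrictOrderedRing R] {A : Matrix ι ι R}

theorem mulVec_pos_of_pos_of_nonneg (hA : ∀ i j, 0 < A i j) {u : ι → R} (hu : ∀ i, 0 ≤ u i)
    (hu0 : u ≠ 0) (i : ι) : 0 < (A *ᵥ u) i := by
  obtain ⟨j, hj⟩ := Function.ne_iff.mp hu0
  exact Finset.sum_pos' (fun k _ => mul_nonneg (hA i k).le (hu k))
    ⟨j, Finset.mem_univ j, mul_pos (hA i j) ((hu j).lt_of_ne' hj)⟩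

theorem pos_of_nonneg_of_mulVec_eq_smul (hA : ∀ i j, 0 < A i j) {y : ι → R}
    (hy : ∀ i, 0 ≤ y i) (hy0 : y ≠ 0) {b : R} (hAy : A *ᵥ y = b • y) (i : ι) : 0 < y i := by
  have hpos := mulVec_pos_of_pos_of_nonneg hA hy hy0 i
  rw [hAy, Pi.smul_apply, smul_eq_mul] at hpos
  exact (hy i).lt_of_ne' (right_ne_zero_of_mul hpos.ne')

theorem exists_eq_smul_or_lt_of_mulVec_eq_smul (hA : ∀ i j, 0 < A i j) {x y : ι → R}
    (hx : ∀ i, 0 < x i) (hy : ∀ i, 0 ≤ y i) {a b : R} (hAx : A *ᵥ x = a • x)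
    (hAy : A *ᵥ y = b • y) : (∃ c : R, y = c • x) ∨ a < b := by
  obtain _ | _ := isEmpty_or_nonempty ι
  · exact Or.inl ⟨0, Subsingleton.elim _ _⟩
  obtain ⟨j, hj⟩ := Finite.exists_min fun i => y i / x i
  set c := y j / x j
  have hcx : c * x j = y j := div_mul_cancel₀ _ (hx j).ne'
  have hu : ∀ i, 0 ≤ (y - c • x) i := fun i => by
    simpa [sub_nonneg] using (le_div_iff₀ (hx i)).mp (hj i)
  by_cases hu0 : y - c • x = 0
  · exact Or.inl ⟨c, sub_eq_zero.mp hu0⟩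
  have hpos := mulVec_pos_of_pos_of_nonneg hA hu hu0 j
  rw [mulVec_sub, mulVec_smul, hAx, hAy] at hpos
  have hba : 0 < (b - a) * y j := by
    simp only [Pi.sub_apply, Pi.smul_apply, smul_eq_mul, ← hcx] at hpos ⊢
    linarith
  exact Or.inr (sub_pos.mp (pos_of_mul_pos_left hba (hy j)))

end LinearOrderedField

end Matrix

theorem stmt11_general (n : ℕ) (M : Matrix (Fin n) (Fin n) ℝ)
    (hprim : ∃ k : ℕ, ∀ i j, 0 < (M ^ k) i j)
    (v : Fin n → ℝ) (hv : ∀ i, 0 < v i) (lam : ℝ) (hMv : M *ᵥ v = lam • v)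
    (w : Fin n → ℝ) (hw : w ≠ 0) (mu : ℝ) (hMw : M *ᵥ w = mu • w) (hmu : mu ≠ lam) :
    ¬ ∀ i, 0 ≤ w i := by
  intro hwnn
  obtain ⟨k, hpos⟩ := hprim
  have hAv := pow_mulVec_of_mulVec_eq_smul hMv k
  have hAw := pow_mulVec_of_mulVec_eq_smul hMw k
  have hwpos := pos_of_nonneg_of_mulVec_eq_smul hpos hwnn hw hAw
  obtain ⟨i, -⟩ := Function.ne_iff.mp hw
  have hv0 : v ≠ 0 := fun h => (hv i).ne' (congrFun h i)
  rcases exists_eq_smul_or_lt_of_mulVec_eq_smul hpos hv hwnn hAv hAw with ⟨c, hc⟩ | hlt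
  · exact hmu (eq_of_mulVec_eq_smul_of_eq_smul hMv hMw hc hw).symm
  rcases exists_eq_smul_or_lt_of_mulVec_eq_smul hpos hwpos (fun i => (hv i).le) hAw hAv
    with ⟨c, hc⟩ | hgt
  · exact hmu (eq_of_mulVec_eq_smul_of_eq_smul hMw hMv hc hv0)
  exact lt_asymm hlt hgt

/-- Perron–Frobenius-type statement: if `M` is a primitive nonnegative real matrix,
`v` a strictly positive eigenvector with eigenvalue `λ`, and `w ≠ 0` an eigenvector for a
different eigenvalue `μ`, then `w` cannot have all components nonnegative. -/
theorem stmt11 (n : ℕ) (M : Matrix (Fin n) (Fin n) ℝ)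
    (hnn : ∀ i j, 0 ≤ M i j) (hprim : ∃ k : ℕ, ∀ i j, 0 < (M ^ k) i j)
    (v : Fin n → ℝ) (hv : ∀ i, 0 < v i) (lam : ℝ) (hMv : M *ᵥ v = lam • v)
    (w : Fin n → ℝ) (hw : w ≠ 0) (mu : ℝ) (hMw : M *ᵥ w = mu • w) (hmu : mu ≠ lam) :
    ¬ ∀ i, 0 ≤ w i :=
  stmt11_general n M hprim v hv lam hMv w hw mu hMw hmu
end

section
/- Let v ∈ R_+^n be a Q-basis of a number field K of degree n, let ε ∈ O_K^×, and let M = (T_ε^v)^T. Suppose M is a primitive nonnegative integer matrix. Let σ be an embedding of K into C such that the conjugate vector σ(v) = (σ(v_1),…,σ(v_n))^T differs from v. Then σ(v) ∉ R_+^n; i.e., some component of σ(v) is not a positive real number. -/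
/-!
Both `v` and `σ(v)` are eigenvectors of `M` (with eigenvalues `ε` and `σ(ε)`), because `M` has
rational entries. If `σ(v)` were a positive real vector, then both would be positive eigenvectors
of the positive matrix `M ^ k`, hence proportional: `σ(v) = c v`. By `ℚ`-linearity `σ(x) = c x`
for every `x ∈ K`, and `x = 1` gives `c = 1`, i.e. `σ(v) = v`.
-/

open Matrix

namespace Matrix

variable {ι : Type*} [Fintype ι] {A : Matrix ι ι ℝ} {u v w : ι → ℝ} {lam mu : ℝ}

theorem pow_mulVec_eq_smul {R : Type*} [CommSemiring R] {B : Matrix ι ι R} {x : ι → R} {c : R}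
    [DecidableEq ι] (h : B *ᵥ x = c • x) (k : ℕ) : (B ^ k) *ᵥ x = c ^ k • x := by
  induction k with
  | zero => simp
  | succ k ih => rw [pow_succ, ← mulVec_mulVec, h, mulVec_smul, ih, smul_smul, pow_succ']

theorem mulVec_eq_re_smul_of_map_ofReal {z : ℂ}
    (h : A.map Complex.ofRealHom *ᵥ (Complex.ofReal ∘ w) = z • (Complex.ofReal ∘ w)) :
    A *ᵥ w = z.re • w := by
  funext j
  simpa using
    congrArg Complex.re ((RingHom.map_mulVec Complex.ofRealHom A w j).trans (congrFun h j))

theorem exists_smul_le_of_pos [Nonempty ι] (hv : ∀ i, 0 < v i) :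
    ∃ t i₀, t • v ≤ w ∧ t * v i₀ = w i₀ := by
  obtain ⟨i₀, hi₀⟩ := Finite.exists_min fun i => w i / v i
  refine ⟨w i₀ / v i₀, i₀, fun i => ?_, div_mul_cancel₀ _ (hv i₀).ne'⟩
  calc w i₀ / v i₀ * v i ≤ w i / v i * v i := mul_le_mul_of_nonneg_right (hi₀ i) (hv i).le
    _ = w i := div_mul_cancel₀ _ (hv i).ne'

theorem eq_zero_of_mulVec_apply_eq_zero (hA : ∀ i j, 0 < A i j) (hu : 0 ≤ u) {i : ι}
    (h : (A *ᵥ u) i = 0) : u = 0 := by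
  have hterms := (Finset.sum_eq_zero_iff_of_nonneg fun j _ => mul_nonneg (hA i j).le (hu j)).1 h
  funext j
  exact (mul_eq_zero.1 (hterms j (Finset.mem_univ j))).resolve_left (hA i j).ne'

theorem eigenvalue_le_of_pos_eigenvectors [Nonempty ι] (hA : ∀ i j, 0 ≤ A i j)
    (hv : ∀ i, 0 < v i) (hw : ∀ i, 0 < w i) (hAv : A *ᵥ v = lam • v) (hAw : A *ᵥ w = mu • w) :
    lam ≤ mu := by
  obtain ⟨t, i₀, hle, heq⟩ := exists_smul_le_of_pos (w := w) hv
  have hmono : A *ᵥ (t • v) ≤ A *ᵥ w := fun i =>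
    Finset.sum_le_sum fun j _ => mul_le_mul_of_nonneg_left (hle j) (hA i j)
  have := hmono i₀
  rw [mulVec_smul, hAv, hAw] at this
  simp only [Pi.smul_apply, smul_eq_mul] at this
  rw [mul_left_comm, heq] at this
  exact le_of_mul_le_mul_right this (hw i₀)

theorem exists_eq_smul_of_pos_eigenvectors (hA : ∀ i j, 0 < A i j)
    (hv : ∀ i, 0 < v i) (hw : ∀ i, 0 < w i) (hAv : A *ᵥ v = lam • v) (hAw : A *ᵥ w = mu • w) :
    ∃ c : ℝ, w = c • v := by
  cases isEmpty_or_nonempty ι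
  · exact ⟨0, Subsingleton.elim _ _⟩
  have hA' i j := (hA i j).le
  obtain rfl : lam = mu := le_antisymm (eigenvalue_le_of_pos_eigenvectors hA' hv hw hAv hAw)
    (eigenvalue_le_of_pos_eigenvectors hA' hw hv hAw hAv)
  obtain ⟨t, i₀, hle, heq⟩ := exists_smul_le_of_pos (w := w) hv
  -- `w - t • v` is a nonnegative eigenvector vanishing at `i₀`
  refine ⟨t, sub_eq_zero.1 (eq_zero_of_mulVec_apply_eq_zero hA (sub_nonneg.2 hle) (i := i₀) ?_)⟩
  simp only [mulVec_sub, mulVec_smul, hAv, hAw, Pi.sub_apply, Pi.smul_apply, smul_eq_mul]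
  rw [mul_left_comm, heq, sub_self]

end Matrix

section

variable {ι L R : Type*} [Fintype ι] [Field L] [Algebra ℚ L] [DivisionRing R]
  (b : Module.Basis ι ℚ L)

theorem map_basis_repr_sum (f : L →+* R) (x : L) : f x = ∑ i, (b.repr x i : R) * f (b i) := by
  conv_lhs => rw [← b.sum_repr x]
  simp [map_sum, Algebra.smul_def]

theorem toMatrix_mulLeft_transpose_mulVec [CharZero R] [DecidableEq ι] (ε : L) (f : L →+* R) :
    (LinearMap.toMatrix b b (LinearMap.mulLeft ℚ ε))ᵀ.map (Rat.castHom R) *ᵥ (f ∘ b) =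
      f ε • (f ∘ b) := by
  funext j
  rw [Pi.smul_apply, Function.comp_apply, smul_eq_mul, ← map_mul, map_basis_repr_sum b f]
  simp [mulVec, dotProduct, Algebra.leftMulMatrix_eq_repr_mul]

theorem RingHom.eq_of_map_basis_eq_mul_const (f g : L →+* R) (c : R)
    (h : ∀ i, f (b i) = g (b i) * c) : f = g := by
  have key x : f x = g x * c := by
    simp_rw [map_basis_repr_sum b f x, map_basis_repr_sum b g x, Finset.sum_mul, h, mul_assoc]
  have hc : c = 1 := by simpa using (key 1).symm
  ext x
  simpa [hc] using key x

end

set_option synthInstance.maxHeartbeats 1000000 in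
theorem stmt12_general (n : ℕ) (K : IntermediateField ℚ ℝ) (b : Module.Basis (Fin n) ℚ K)
    (hpos : ∀ i, 0 < (b i : ℝ))
    (ε : K)
    (M : Matrix (Fin n) (Fin n) ℚ)
    (hM : M = (LinearMap.toMatrix b b (LinearMap.mulLeft ℚ ε))ᵀ)
    (hprim : ∃ k : ℕ, ∀ i j, 0 < (M ^ k) i j)
    (σ : K →+* ℂ)
    (hne : (fun i => σ (b i)) ≠ fun i => ((b i : ℝ) : ℂ)) :
    ¬ ∀ i, (σ (b i)).im = 0 ∧ 0 < (σ (b i)).re := by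
  intro h
  set A := M.map (Rat.castHom ℝ)
  set w : Fin n → ℝ := fun i => (σ (b i)).re
  have hσb : σ ∘ b = Complex.ofReal ∘ w := funext fun i => Complex.ext rfl (by simp [(h i).1])
  have hAv : A *ᵥ (algebraMap K ℝ ∘ b) = algebraMap K ℝ ε • (algebraMap K ℝ ∘ b) := by
    simp only [A, hM]
    exact toMatrix_mulLeft_transpose_mulVec b ε (algebraMap K ℝ)
  have hAw : A *ᵥ w = (σ ε).re • w := by
    apply mulVec_eq_re_smul_of_map_ofReal
    rw [← hσb, Matrix.map_map, hM]
    convert toMatrix_mulLeft_transpose_mulVec b ε σ using 3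
    ext q
    simp
  obtain ⟨k, hk⟩ := hprim
  have hAk i j : 0 < (A ^ k) i j := by
    rw [← Matrix.map_pow]
    exact Rat.cast_pos.2 (hk i j)
  obtain ⟨c, hc⟩ := exists_eq_smul_of_pos_eigenvectors hAk hpos (fun i => (h i).2)
    (pow_mulVec_eq_smul hAv k) (pow_mulVec_eq_smul hAw k)
  refine hne (funext fun i => RingHom.congr_fun (RingHom.eq_of_map_basis_eq_mul_const b σ
    (Complex.ofRealHom.comp (algebraMap K ℝ)) c fun i => ?_) (b i))
  rw [← Function.comp_apply (f := σ), hσb]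
  simp only [Function.comp_apply, RingHom.coe_comp, Complex.ofRealHom_eq_coe]
  exact_mod_cast (congrFun hc i).trans (mul_comm _ _)

set_option synthInstance.maxHeartbeats 1000000 in
/-- Let `v ∈ ℝ₊ⁿ` be a ℚ-basis of a number field `K ⊆ ℝ` of degree `n`, `ε` a unit of `O_K`,
and `M = (T_ε^v)ᵀ` a primitive nonnegative integer matrix. If `σ : K → ℂ` is an embedding
with `σ(v) ≠ v`, then some component of `σ(v)` is not a positive real number. -/
theorem stmt12 (n : ℕ) (K : IntermediateField ℚ ℝ) (b : Module.Basis (Fin n) ℚ K)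
    (hpos : ∀ i, 0 < (b i : ℝ))
    (ε : K) (hε0 : ε ≠ 0) (hε1 : IsIntegral ℤ ε) (hε2 : IsIntegral ℤ ε⁻¹)
    (M : Matrix (Fin n) (Fin n) ℚ)
    (hM : M = (LinearMap.toMatrix b b (LinearMap.mulLeft ℚ ε))ᵀ)
    (hint : ∀ i j, ∃ z : ℤ, M i j = z) (hnn : ∀ i j, 0 ≤ M i j)
    (hprim : ∃ k : ℕ, ∀ i j, 0 < (M ^ k) i j)
    (σ : K →+* ℂ)
    (hne : (fun i => σ (b i)) ≠ fun i => ((b i : ℝ) : ℂ)) :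
    ¬ ∀ i, (σ (b i)).im = 0 ∧ 0 < (σ (b i)).re :=
  stmt12_general n K b hpos ε M hM hprim σ hne
end

section
/- Let y be an algebraic number of degree n with minimal polynomial x^n + α_{n-1}x^{n-1} + … + α_1 x + α_0 where α_0 > 0, and let v = (y^{n-1},…,y,1)^T. If ε ∈ O_{Q(y)}^× is a unit such that T_ε^v is a matrix with all entries nonnegative integers and determinant 1, then T_ε^v is the identity matrix. -/
open Matrix

/-!
In the basis `y ^ (n - 1), …, y, 1` multiplication by `y` shifts coordinates by one, except that
`y * y ^ (n - 1) = y ^ n = -∑ α r * y ^ r`. As `e` commutes with `y`, column `j - 1` of `T` is this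
shift applied to column `j`; its last entry reads `T (n - 1) (j - 1) = -α 0 * T 0 j`. Both sides are
nonnegative and `α 0 > 0`, so they vanish, and then the recurrence makes `T` constant along
diagonals with zero first and last rows off the diagonal, i.e. `T = c • 1`. Finally `c ^ n = 1`
with `c ≥ 0` forces `c = 1`.
-/

namespace Matrix

variable {M : Type*} [Zero M] {m : ℕ} {T : Matrix (Fin (m + 1)) (Fin (m + 1)) M}

theorem apply_eq_zero_of_lt_of_shift
    (hshift : ∀ i j : Fin m, T i.castSucc j.castSucc = T i.succ j.succ)
    (hfirst : ∀ j : Fin m, T 0 j.succ = 0) {i j : Fin (m + 1)} (hij : i < j) : T i j = 0 := by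
  induction i using Fin.induction generalizing j with
  | zero =>
    obtain ⟨j, rfl⟩ := Fin.exists_succ_eq.2 hij.ne'
    exact hfirst j
  | succ i ih =>
    obtain ⟨j, rfl⟩ := Fin.exists_succ_eq.2 (Fin.succ_pos i |>.trans hij).ne'
    rw [← hshift]
    exact ih (Fin.castSucc_lt_castSucc_iff.2 (Fin.succ_lt_succ_iff.1 hij))

theorem eq_diagonal_of_shift
    (hshift : ∀ i j : Fin m, T i.castSucc j.castSucc = T i.succ j.succ)
    (hfirst : ∀ j : Fin m, T 0 j.succ = 0) (hlast : ∀ j : Fin m, T (Fin.last m) j.castSucc = 0) :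
    T = diagonal fun _ => T 0 0 := by
  have hdiag (i : Fin (m + 1)) : T i i = T 0 0 := by
    induction i using Fin.induction with
    | zero => rfl
    | succ i ih => rw [← hshift, ih]
  -- Reversing both indices keeps `T` shift invariant and swaps the first and the last row.
  have hlower {i j : Fin (m + 1)} (hij : j < i) : T i j = 0 := by
    simpa using apply_eq_zero_of_lt_of_shift (T := T.submatrix Fin.rev Fin.rev)
      (fun i j ↦ by simp [Fin.rev_succ, Fin.rev_castSucc, hshift])
      (fun j ↦ by simpa [Fin.rev_succ] using hlast j.rev) (Fin.rev_lt_rev.2 hij)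
  ext i j
  rcases lt_trichotomy i j with hij | rfl | hij
  · rw [apply_eq_zero_of_lt_of_shift hshift hfirst hij, diagonal_apply_ne _ hij.ne]
  · rw [hdiag, diagonal_apply_eq]
  · rw [hlower hij, diagonal_apply_ne _ hij.ne']

end Matrix

section ReversedPowerBasis

variable {R A : Type*} [CommRing R] [CommRing A] [Algebra R A] {m : ℕ} {y : A}
  {b : Module.Basis (Fin (m + 1)) R A}

theorem mul_basis_succ (hb : ∀ i : Fin (m + 1), b i = y ^ (m - i)) (j : Fin m) :
    y * b j.succ = b j.castSucc := by
  rw [hb, hb, ← pow_succ']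
  congr 1
  simp only [Fin.val_succ, Fin.val_castSucc]
  omega

theorem pow_eq_sum_basis (hb : ∀ i : Fin (m + 1), b i = y ^ (m - i)) {α : ℕ → R}
    (hy : (∑ r ∈ Finset.range (m + 1), algebraMap R A (α r) * y ^ r) + y ^ (m + 1) = 0) :
    y ^ (m + 1) = ∑ k : Fin (m + 1), (-α (m - k)) • b k := by
  have : ∑ r ∈ Finset.range (m + 1), algebraMap R A (α r) * y ^ r
      = ∑ k : Fin (m + 1), α (m - k) • b k := by
    rw [← Finset.sum_range_reflect, Finset.sum_range]
    simp only [hb, Algebra.smul_def, add_tsub_cancel_right]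
  simp only [neg_smul, Finset.sum_neg_distrib]
  linear_combination hy - this

theorem repr_mul (hb : ∀ i : Fin (m + 1), b i = y ^ (m - i)) {α : ℕ → R}
    (hy : (∑ r ∈ Finset.range (m + 1), algebraMap R A (α r) * y ^ r) + y ^ (m + 1) = 0)
    (x : A) (k : Fin (m + 1)) :
    b.repr (y * x) k =
      -α (m - k) * b.repr x 0 + ∑ i : Fin m, if i.castSucc = k then b.repr x i.succ else 0 := by
  conv_lhs => rw [← b.sum_repr x, Fin.sum_univ_succ, mul_add, Finset.mul_sum]
  have hy0 : y * b 0 = y ^ (m + 1) := by rw [hb, ← pow_succ']; rfl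
  simp only [mul_smul_comm, mul_basis_succ hb, hy0, pow_eq_sum_basis hb hy, map_add, map_smul,
    map_sum, b.repr_self, Finsupp.add_apply, Finsupp.smul_apply, smul_eq_mul,
    Finsupp.coe_finsetSum, Finset.sum_apply, Finsupp.single_apply]
  simp [mul_ite, mul_comm]

theorem repr_mul_last (hb : ∀ i : Fin (m + 1), b i = y ^ (m - i)) {α : ℕ → R}
    (hy : (∑ r ∈ Finset.range (m + 1), algebraMap R A (α r) * y ^ r) + y ^ (m + 1) = 0)
    (x : A) : b.repr (y * x) (Fin.last m) = -α 0 * b.repr x 0 := by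
  simp [repr_mul hb hy, Fin.castSucc_ne_last]

theorem repr_mul_castSucc (hb : ∀ i : Fin (m + 1), b i = y ^ (m - i)) {α : ℕ → R}
    (hy : (∑ r ∈ Finset.range (m + 1), algebraMap R A (α r) * y ^ r) + y ^ (m + 1) = 0)
    (x : A) (k : Fin m) :
    b.repr (y * x) k.castSucc = -α (m - k) * b.repr x 0 + b.repr x k.succ := by
  simp [repr_mul hb hy]

theorem leftMulMatrix_castSucc_eq_repr_mul (hb : ∀ i : Fin (m + 1), b i = y ^ (m - i)) (e : A)
    (k : Fin (m + 1)) (j : Fin m) :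
    Algebra.leftMulMatrix b e k j.castSucc = b.repr (y * (e * b j.succ)) k := by
  rw [Algebra.leftMulMatrix_eq_repr_mul, ← mul_basis_succ hb, mul_left_comm]

end ReversedPowerBasis

theorem stmt13_general (n : ℕ) (K : Type*) [Field K] [Algebra ℚ K]
    (y : K) (α : ℕ → ℚ) (hα0 : 0 < α 0)
    (hy : (∑ r ∈ Finset.range n, algebraMap ℚ K (α r) * y ^ r) + y ^ n = 0)
    (b : Module.Basis (Fin n) ℚ K) (hb : ∀ i : Fin n, b i = y ^ (n - 1 - (i : ℕ)))
    (e : K)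
    (T : Matrix (Fin n) (Fin n) ℚ)
    (hT : T = LinearMap.toMatrix b b (LinearMap.mulLeft ℚ e))
    (hnn : ∀ i j, 0 ≤ T i j)
    (hdet : T.det = 1) : T = 1 := by
  obtain _ | m := n
  · exact Subsingleton.elim _ _
  replace hT : T = Algebra.leftMulMatrix b e := hT
  replace hb : ∀ i : Fin (m + 1), b i = y ^ (m - i) := by simpa using hb
  have hlast (j : Fin m) : T (Fin.last m) j.castSucc = -α 0 * T 0 j.succ := by
    rw [hT, leftMulMatrix_castSucc_eq_repr_mul hb, repr_mul_last hb hy,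
      Algebra.leftMulMatrix_eq_repr_mul]
  have hfirst (j : Fin m) : T 0 j.succ = 0 := by
    nlinarith [hlast j, hnn 0 j.succ, hnn (Fin.last m) j.castSucc]
  have hshift (i j : Fin m) : T i.castSucc j.castSucc = T i.succ j.succ := by
    rw [hT, leftMulMatrix_castSucc_eq_repr_mul hb, repr_mul_castSucc hb hy,
      ← Algebra.leftMulMatrix_eq_repr_mul, ← Algebra.leftMulMatrix_eq_repr_mul, ← hT, hfirst,
      mul_zero, zero_add]
  have hdiag := Matrix.eq_diagonal_of_shift hshift hfirst fun j ↦ by rw [hlast, hfirst, mul_zero]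
  have h00 : T 0 0 = 1 := by
    rw [hdiag, Matrix.det_diagonal, Finset.prod_const, Finset.card_univ, Fintype.card_fin,
      pow_eq_one_iff_of_nonneg (hnn 0 0) m.succ_ne_zero] at hdet
    exact hdet
  rw [hdiag, h00, Matrix.diagonal_one]

/-- Let `y` be algebraic of degree `n` with monic minimal polynomial having positive constant
coefficient `α 0`, and `v = (y^{n-1},…,y,1)` the power basis of `ℚ(y)`. If `ε` is an algebraic
unit of `ℚ(y)` whose multiplication matrix `T_ε^v` has all entries nonnegative integers and
determinant `1`, then `T_ε^v` is the identity matrix. -/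
theorem stmt13 (n : ℕ) (K : Type*) [Field K] [Algebra ℚ K]
    (y : K) (α : ℕ → ℚ) (hα0 : 0 < α 0)
    (hy : (∑ r ∈ Finset.range n, algebraMap ℚ K (α r) * y ^ r) + y ^ n = 0)
    (b : Module.Basis (Fin n) ℚ K) (hb : ∀ i : Fin n, b i = y ^ (n - 1 - (i : ℕ)))
    (e : K) (he0 : e ≠ 0) (he1 : IsIntegral ℤ e) (he2 : IsIntegral ℤ e⁻¹)
    (T : Matrix (Fin n) (Fin n) ℚ)
    (hT : T = LinearMap.toMatrix b b (LinearMap.mulLeft ℚ e))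
    (hnn : ∀ i j, 0 ≤ T i j) (hint : ∀ i j, ∃ z : ℤ, T i j = z)
    (hdet : T.det = 1) : T = 1 :=
  stmt13_general n K y α hα0 hy b hb e T hT hnn hdet
end

section
/- Let y be the unique positive root of y^3 + y^2 − 2y − 1 = 0 and let v = (y^2, y, 1)^T. Set M_1 = [[1,1,0],[0,1,1],[1,1,−1]] and M_2 = [[−1,1,1],[1,0,−1],[−1,0,2]]. Then M_1 v = ε_1 v and M_2 v = ε_2 v, where ε_1 = −1 + y + y^2 and ε_2 = 2 − y^2 are units in the ring of integers of Q(y). -/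
/-!
Every claim reduces to a polynomial identity modulo `y³ + y² − 2y − 1`. In particular
`ε₁ = −1 + y + y²` and `ε₂ = 2 − y²` are units of `ℤ[y]`, with inverses `y² − 1` and `1 + y`.
-/

open Matrix

theorem IsIntegral.inv_of_mul_eq_one {R K : Type*} [CommRing R] [Field K] [Algebra R K]
    {a b : K} (hb : IsIntegral R b) (hab : a * b = 1) : IsIntegral R a⁻¹ :=
  inv_eq_of_mul_eq_one_right hab ▸ hb

section CubicRoot

variable {y : ℝ} (hy : y ^ 3 + y ^ 2 - 2 * y - 1 = 0)
include hy

open Polynomial in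
theorem isIntegral_of_cubic_root : IsIntegral ℤ y := by
  refine ⟨X ^ 3 + X ^ 2 - 2 * X - 1, by monicity!, ?_⟩
  simp only [eval₂_sub, eval₂_add, eval₂_pow, eval₂_mul, eval₂_X, eval₂_one, eval₂_ofNat]
  exact_mod_cast hy

theorem mulVec_eq_smul_of_cubic_root₁ :
    (!![1, 1, 0; 0, 1, 1; 1, 1, -1] : Matrix (Fin 3) (Fin 3) ℝ) *ᵥ ![y ^ 2, y, 1] =
      (-1 + y + y ^ 2) • ![y ^ 2, y, 1] := by
  simp only [cons_mulVec, empty_mulVec, vec3_dotProduct', smul_vec3, smul_eq_mul, vecCons_inj,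
    and_true]
  refine ⟨?_, ?_, ?_⟩
  · linear_combination (-y) * hy
  · linear_combination (-1) * hy
  · ring

theorem mulVec_eq_smul_of_cubic_root₂ :
    (!![-1, 1, 1; 1, 0, -1; -1, 0, 2] : Matrix (Fin 3) (Fin 3) ℝ) *ᵥ ![y ^ 2, y, 1] =
      (2 - y ^ 2) • ![y ^ 2, y, 1] := by
  simp only [cons_mulVec, empty_mulVec, vec3_dotProduct', smul_vec3, smul_eq_mul, vecCons_inj,
    and_true]
  refine ⟨?_, ?_, ?_⟩
  · linear_combination (y - 1) * hy
  · linear_combination hy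
  · ring

theorem mul_sq_sub_one_of_cubic_root : (-1 + y + y ^ 2) * (y ^ 2 - 1) = 1 := by
  linear_combination y * hy

theorem mul_one_add_of_cubic_root : (2 - y ^ 2) * (1 + y) = 1 := by
  linear_combination (-1) * hy

end CubicRoot

theorem stmt14_general (y : ℝ) (hy : y ^ 3 + y ^ 2 - 2 * y - 1 = 0) :
    (!![1, 1, 0; 0, 1, 1; 1, 1, -1] : Matrix (Fin 3) (Fin 3) ℝ) *ᵥ ![y ^ 2, y, 1] =
      (-1 + y + y ^ 2) • ![y ^ 2, y, 1] ∧
    (!![-1, 1, 1; 1, 0, -1; -1, 0, 2] : Matrix (Fin 3) (Fin 3) ℝ) *ᵥ ![y ^ 2, y, 1] =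
      (2 - y ^ 2) • ![y ^ 2, y, 1] ∧
    IsIntegral ℤ (-1 + y + y ^ 2) ∧ IsIntegral ℤ (-1 + y + y ^ 2)⁻¹ ∧
    IsIntegral ℤ (2 - y ^ 2) ∧ IsIntegral ℤ (2 - y ^ 2)⁻¹ := by
  have hy' : IsIntegral ℤ y := isIntegral_of_cubic_root hy
  have hy2 : IsIntegral ℤ (y ^ 2) := hy'.pow 2
  have h1 : IsIntegral ℤ (1 : ℝ) := isIntegral_one
  have h2 : IsIntegral ℤ (2 : ℝ) := mod_cast isIntegral_natCast 2
  exact ⟨mulVec_eq_smul_of_cubic_root₁ hy, mulVec_eq_smul_of_cubic_root₂ hy,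
    (h1.neg.add hy').add hy2, (hy2.sub h1).inv_of_mul_eq_one (mul_sq_sub_one_of_cubic_root hy),
    h2.sub hy2, (h1.add hy').inv_of_mul_eq_one (mul_one_add_of_cubic_root hy)⟩

/-- For the unique positive root `y` of `y³ + y² − 2y − 1 = 0` and `v = (y², y, 1)`:
`M₁ v = ε₁ v` and `M₂ v = ε₂ v` where `ε₁ = −1 + y + y²` and `ε₂ = 2 − y²` are algebraic
units. -/
theorem stmt14 (y : ℝ) (hpos : 0 < y) (hy : y ^ 3 + y ^ 2 - 2 * y - 1 = 0)
    (huniq : ∀ x : ℝ, 0 < x → x ^ 3 + x ^ 2 - 2 * x - 1 = 0 → x = y) :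
    (!![1, 1, 0; 0, 1, 1; 1, 1, -1] : Matrix (Fin 3) (Fin 3) ℝ) *ᵥ ![y ^ 2, y, 1] =
      (-1 + y + y ^ 2) • ![y ^ 2, y, 1] ∧
    (!![-1, 1, 1; 1, 0, -1; -1, 0, 2] : Matrix (Fin 3) (Fin 3) ℝ) *ᵥ ![y ^ 2, y, 1] =
      (2 - y ^ 2) • ![y ^ 2, y, 1] ∧
    IsIntegral ℤ (-1 + y + y ^ 2) ∧ IsIntegral ℤ (-1 + y + y ^ 2)⁻¹ ∧
    IsIntegral ℤ (2 - y ^ 2) ∧ IsIntegral ℤ (2 - y ^ 2)⁻¹ :=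
  stmt14_general y hy
end

section
/- Let s, t ∈ Q_+ with t > s and t > s²/4. Then the cubic polynomial x^3 + s x^2 + t x − 1 has negative discriminant; consequently it has exactly one real root, which lies in the interval (0,1), and the field generated by this root is a complex cubic field. -/
/-!
Write the cubic as `x (x² + s x + t) - 1`. When `s² < 4t` the quadratic factor is positive, so
a real root `x` satisfies `x > 0`, and `x < 1` because the cubic is at least `s + t > 0` on
`[1, ∞)`.
A root exists in `(0, 1)` by the intermediate value theorem, and it is unique because the cubic
is strictly increasing on `(0, ∞)`. Dividing out the real root `y` leaves
`z² + (s + y) z + (t + s y + y²)`, whose discriminant `s² - 4t - 2sy - 3y²` is negative, so the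
remaining two roots are non-real. The discriminant of the cubic is negative because it equals
`(s² - 4t)(t² + 4s) - 2st - 27`.
-/

theorem cubic_discrim_neg {K : Type*} [Field K] [LinearOrder K] [IsStrictOrderedRing K]
    {s t : K} (hs : 0 ≤ s) (hst : s ^ 2 < 4 * t) :
    -18 * s * t + 4 * s ^ 3 + s ^ 2 * t ^ 2 - 4 * t ^ 3 - 27 < 0 := by
  have ht : 0 < t := by nlinarith
  have hfactor : 0 < (4 * t - s ^ 2) * (t ^ 2 + 4 * s) := by
    apply mul_pos <;> nlinarith
  nlinarith [mul_nonneg hs ht.le]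

theorem Complex.exists_quadratic_eq_zero_im_ne_zero {b c : ℝ} (hbc : b ^ 2 < 4 * c) :
    ∃ z : ℂ, z ^ 2 + b * z + c = 0 ∧ z.im ≠ 0 := by
  set w := Real.sqrt (4 * c - b ^ 2)
  have hw : (w : ℂ) ^ 2 = 4 * c - b ^ 2 := by
    exact_mod_cast Real.sq_sqrt (by linarith : 0 ≤ 4 * c - b ^ 2)
  refine ⟨-b / 2 + w / 2 * I, ?_, ?_⟩
  · linear_combination (-1 / 4 : ℂ) * hw + ((w : ℂ) ^ 2 / 4) * I_sq
  · simpa [w] using Real.sqrt_ne_zero'.2 (by linarith : 0 < 4 * c - b ^ 2)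

section RealCubic

variable {s t : ℝ}

theorem quadratic_pos_of_sq_lt (hst : s ^ 2 < 4 * t) (x : ℝ) : 0 < x ^ 2 + s * x + t := by
  nlinarith [sq_nonneg (2 * x + s)]

theorem pos_of_cubic_eq_zero (hst : s ^ 2 < 4 * t) {x : ℝ}
    (hx : x ^ 3 + s * x ^ 2 + t * x - 1 = 0) : 0 < x := by
  have hq := quadratic_pos_of_sq_lt hst x
  have hprod : x * (x ^ 2 + s * x + t) = 1 := by linear_combination hx
  by_contra! h
  nlinarith [mul_nonpos_of_nonpos_of_nonneg h hq.le]

theorem lt_one_of_cubic_eq_zero (hs : 0 ≤ s) (hst : s ^ 2 < 4 * t) {x : ℝ}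
    (hx : x ^ 3 + s * x ^ 2 + t * x - 1 = 0) : x < 1 := by
  have ht : 0 < t := by nlinarith
  by_contra! h
  nlinarith [mul_le_mul h h zero_le_one (by linarith)]

theorem eq_of_cubic_eq_zero (hs : 0 ≤ s) (hst : s ^ 2 < 4 * t) {x y : ℝ}
    (hx : x ^ 3 + s * x ^ 2 + t * x - 1 = 0) (hy : y ^ 3 + s * y ^ 2 + t * y - 1 = 0) :
    x = y := by
  have hx0 := pos_of_cubic_eq_zero hst hx
  have hy0 := pos_of_cubic_eq_zero hst hy
  have ht : 0 < t := by nlinarith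
  have hfactor : (x - y) * (x ^ 2 + x * y + y ^ 2 + s * (x + y) + t) = 0 := by
    linear_combination hx - hy
  have hpos : 0 < x ^ 2 + x * y + y ^ 2 + s * (x + y) + t := by positivity
  linarith [(mul_eq_zero.1 hfactor).resolve_right hpos.ne']

theorem exists_cubic_eq_zero (hs : 0 ≤ s) (hst : s ^ 2 < 4 * t) :
    ∃ y : ℝ, y ^ 3 + s * y ^ 2 + t * y - 1 = 0 := by
  have ht : 0 < t := by nlinarith
  have hsign : (0 : ℝ) ∈
      Set.Icc (0 ^ 3 + s * 0 ^ 2 + t * 0 - 1) (1 ^ 3 + s * 1 ^ 2 + t * 1 - 1) :=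
    ⟨by norm_num, by norm_num; linarith⟩
  obtain ⟨y, -, hy⟩ := intermediate_value_Icc zero_le_one
    (f := fun x : ℝ => x ^ 3 + s * x ^ 2 + t * x - 1) (by fun_prop) hsign
  exact ⟨y, hy⟩

theorem Complex.exists_cubic_eq_zero_im_ne_zero (hs : 0 ≤ s) (hst : s ^ 2 < 4 * t) {y : ℝ}
    (hy : y ^ 3 + s * y ^ 2 + t * y - 1 = 0) :
    ∃ z : ℂ, z ^ 3 + s * z ^ 2 + t * z - 1 = 0 ∧ z.im ≠ 0 := by
  have hy0 := pos_of_cubic_eq_zero hst hy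
  obtain ⟨z, hz, him⟩ := exists_quadratic_eq_zero_im_ne_zero
    (b := s + y) (c := t + s * y + y ^ 2) (by nlinarith [mul_nonneg hs hy0.le])
  have hyC : (y : ℂ) ^ 3 + s * (y : ℂ) ^ 2 + t * y - 1 = 0 := by exact_mod_cast hy
  refine ⟨z, ?_, him⟩
  push_cast at hz
  linear_combination (z - y) * hz + hyC

end RealCubic

theorem stmt16_general (s t : ℚ) (hs : 0 < s) (ht4 : t > s ^ 2 / 4) :
    (-18 * s * t + 4 * s ^ 3 + s ^ 2 * t ^ 2 - 4 * t ^ 3 - 27 < 0) ∧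
    (∃! x : ℝ, x ^ 3 + (s : ℝ) * x ^ 2 + (t : ℝ) * x - 1 = 0) ∧
    (∀ x : ℝ, x ^ 3 + (s : ℝ) * x ^ 2 + (t : ℝ) * x - 1 = 0 → 0 < x ∧ x < 1) ∧
    (∃ z : ℂ, z ^ 3 + (s : ℂ) * z ^ 2 + (t : ℂ) * z - 1 = 0 ∧ z.im ≠ 0) := by
  have hst : s ^ 2 < 4 * t := by linarith
  have hsR : (0 : ℝ) ≤ s := by exact_mod_cast hs.le
  have hstR : (s : ℝ) ^ 2 < 4 * t := by exact_mod_cast hst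
  obtain ⟨y, hy⟩ := exists_cubic_eq_zero hsR hstR
  obtain ⟨z, hz, him⟩ := Complex.exists_cubic_eq_zero_im_ne_zero hsR hstR hy
  refine ⟨cubic_discrim_neg hs.le hst,
    ⟨y, hy, fun x hx => eq_of_cubic_eq_zero hsR hstR hx hy⟩,
    fun x hx => ⟨pos_of_cubic_eq_zero hstR hx, lt_one_of_cubic_eq_zero hsR hstR hx⟩,
    z, ?_, him⟩
  simpa only [Complex.ofReal_ratCast] using hz

/-- For positive rationals `s, t` with `t > s` and `t > s²/4`, the cubic `x³ + sx² + tx − 1`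
has negative discriminant; consequently it has exactly one real root, which lies in `(0,1)`,
and it has a non-real complex root (the generated field is a complex cubic field). -/
theorem stmt16 (s t : ℚ) (hs : 0 < s) (ht : 0 < t) (hts : t > s) (ht4 : t > s ^ 2 / 4) :
    (-18 * s * t + 4 * s ^ 3 + s ^ 2 * t ^ 2 - 4 * t ^ 3 - 27 < 0) ∧
    (∃! x : ℝ, x ^ 3 + (s : ℝ) * x ^ 2 + (t : ℝ) * x - 1 = 0) ∧
    (∀ x : ℝ, x ^ 3 + (s : ℝ) * x ^ 2 + (t : ℝ) * x - 1 = 0 → 0 < x ∧ x < 1) ∧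
    (∃ z : ℂ, z ^ 3 + (s : ℂ) * z ^ 2 + (t : ℂ) * z - 1 = 0 ∧ z.im ≠ 0) :=
  stmt16_general s t hs ht4
end
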